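/- Let f ∈ ℂ[[x,y,z,t]] be such that, with respect to the weights (4,3,2,1) for (x,y,z,t), one has wt f = 6, and such that f is contact equivalent to x³ + y⁴ + z² + t² (i.e. f defines an E₆-singularity). Then the coefficient of the monomial xt² in f is non-zero. -/

import Mathlib

/-!
Write `Ψ = Φ⁻¹` and `pᵢ = Ψ(Xᵢ)`, so that `p₀³ + p₁⁴ + p₂² + p₃²` is a unit multiple of `f`: it
vanishes in weight `< 6` and at `xt²`. The linear parts of the `pᵢ` form an invertible matrix,
so no nontrivial combination `c₂p₂ + c₃p₃` lies in `𝔪²` (`𝔪` the maximal ideal). The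
coefficients of `t², xt, yt, zt` say exactly that `a₂p₂ + a₃p₃ ∈ 𝔪²`, where `aᵢ` is the
coefficient of `t` in `pᵢ`; hence `a = 0`. Then `t³` kills the `t`-coefficient of `p₀`, so the
`t`-coefficient of `p₁` is nonzero, and `t⁴` gives `b₂² + b₃² ≠ 0` for the `t²`-coefficients
`bᵢ`. But now the coefficients of `xt², yt², zt²` say that `b₂p₂ + b₃p₃ ∈ 𝔪²`, a contradiction.

Coefficients of `tⁿ` are read off the restriction to the `t`-axis, coefficients of `vtⁿ` from
the restriction of `∂/∂v`.
-/

noncomputable section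

open MvPowerSeries

/-- `f` and `g` are contact equivalent if `g = u·Φ(f)` for some ℂ-algebra automorphism `Φ`
of `ℂ[[x,y,z,t]]` and some unit `u`. -/
def ContactEquiv (f g : MvPowerSeries (Fin 4) ℂ) : Prop :=
  ∃ (Φ : MvPowerSeries (Fin 4) ℂ ≃ₐ[ℂ] MvPowerSeries (Fin 4) ℂ)
    (u : (MvPowerSeries (Fin 4) ℂ)ˣ), g = (u : MvPowerSeries (Fin 4) ℂ) * Φ f

open Finsupp

namespace PowerSeries

variable {R : Type*} [CommSemiring R]

theorem coeff_pow_mul_of_X_pow_dvd {P : R⟦X⟧} {m : ℕ} (hP : X ^ m ∣ P) (n : ℕ) (D : R⟦X⟧) :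
    coeff (m * n) (P ^ n * D) = coeff m P ^ n * constantCoeff D := by
  obtain ⟨Q, rfl⟩ := hP
  rw [mul_pow, ← pow_mul, mul_assoc, coeff_X_pow_mul', if_pos le_rfl, Nat.sub_self,
    coeff_X_pow_mul', if_pos le_rfl, Nat.sub_self, coeff_zero_eq_constantCoeff_apply,
    coeff_zero_eq_constantCoeff_apply, map_mul, map_pow]

theorem coeff_pow_mul_of_X_pow_dvd_of_lt {P : R⟦X⟧} {m : ℕ} (hP : X ^ m ∣ P) (n : ℕ) (D : R⟦X⟧)
    {a : ℕ} (ha : a < m * n) : coeff a (P ^ n * D) = 0 :=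
  X_pow_dvd_iff.mp (pow_mul (X : R⟦X⟧) m n ▸ (pow_dvd_pow_of_dvd hP n).mul_right D) a ha

end PowerSeries

namespace MvPowerSeries

variable {σ R : Type*} [CommSemiring R]

theorem coeff_mul_eq_constantCoeff_mul_of_weight_le {w : σ → ℕ} (hw : ∀ i, w i ≠ 0)
    {f : MvPowerSeries σ R} {d : σ →₀ ℕ} (hd : (weight w d : ℕ∞) ≤ f.weightedOrder w)
    (g : MvPowerSeries σ R) : coeff d (g * f) = constantCoeff g * coeff d f := by
  classical
  rw [coeff_mul, Finset.sum_eq_single (0, d), coeff_zero_eq_constantCoeff_apply]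
  · rintro ⟨a, b⟩ hab hne
    rw [Finset.HasAntidiagonal.mem_antidiagonal] at hab
    dsimp only at hab ⊢
    have ha : a ≠ 0 := by
      rintro rfl
      rw [zero_add] at hab
      exact hne (by rw [hab])
    obtain ⟨s, hs⟩ : ∃ s, a s ≠ 0 := by
      by_contra! h
      exact ha (Finsupp.ext h)
    have hb : weight w b < weight w d := by
      have := le_weight_of_ne_zero' w hs
      have := Nat.pos_of_ne_zero (hw s)
      rw [← hab, map_add]
      omega
    rw [coeff_eq_zero_of_lt_weightedOrder w ((Nat.cast_lt.mpr hb).trans_le hd), mul_zero]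
  · simp

def restrictAxis (i : σ) : MvPowerSeries σ R →ₐ[R] PowerSeries R :=
  killCompl (Function.Embedding.punit i)

theorem coeff_restrictAxis (i : σ) (f : MvPowerSeries σ R) (n : ℕ) :
    PowerSeries.coeff n (restrictAxis i f) = coeff (single i n) f := by
  rw [PowerSeries.coeff, restrictAxis, coeff_killCompl, embDomain_single]
  rfl

theorem constantCoeff_restrictAxis (i : σ) (f : MvPowerSeries σ R) :
    PowerSeries.constantCoeff (restrictAxis i f) = constantCoeff f := by
  rw [← PowerSeries.coeff_zero_eq_constantCoeff_apply, coeff_restrictAxis, single_zero,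
    coeff_zero_eq_constantCoeff_apply]

theorem X_pow_dvd_restrictAxis {i : σ} {f : MvPowerSeries σ R} {m : ℕ}
    (hf : ∀ a < m, coeff (single i a) f = 0) : PowerSeries.X ^ m ∣ restrictAxis i f :=
  PowerSeries.X_pow_dvd_iff.mpr fun a ha => by rw [coeff_restrictAxis, hf a ha]

theorem coeff_single_add_single_eq_coeff_pderiv {i j : σ} (hij : i ≠ j) (n : ℕ)
    (f : MvPowerSeries σ R) :
    coeff (single i 1 + single j n) f = coeff (single j n) (pderiv R i f) := by
  rw [coeff_pderiv, single_eq_of_ne hij, Nat.cast_zero, zero_add, mul_one, add_comm]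

theorem constantCoeff_pderiv (i : σ) (f : MvPowerSeries σ R) :
    constantCoeff (pderiv R i f) = coeff (single i 1) f := by
  rw [← coeff_zero_eq_constantCoeff_apply, coeff_pderiv, zero_add, coe_zero, Pi.zero_apply,
    Nat.cast_zero, zero_add, mul_one]

section Axis

variable {i j : σ} {p : MvPowerSeries σ R} {m : ℕ}

theorem coeff_single_pow (hp : ∀ a < m, coeff (single j a) p = 0) {n a : ℕ}
    (ha : m * n = a) : coeff (single j a) (p ^ n) = coeff (single j m) p ^ n := by
  rw [← ha, ← coeff_restrictAxis, map_pow, ← mul_one (restrictAxis j p ^ n),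
    PowerSeries.coeff_pow_mul_of_X_pow_dvd (X_pow_dvd_restrictAxis hp), coeff_restrictAxis,
    map_one, mul_one]

theorem coeff_single_pow_of_lt (hp : ∀ a < m, coeff (single j a) p = 0) {n a : ℕ}
    (ha : a < m * n) : coeff (single j a) (p ^ n) = 0 := by
  rw [← coeff_restrictAxis, map_pow, ← mul_one (restrictAxis j p ^ n),
    PowerSeries.coeff_pow_mul_of_X_pow_dvd_of_lt (X_pow_dvd_restrictAxis hp) n _ ha]

theorem pderiv_pow_succ (i : σ) (p : MvPowerSeries σ R) (n : ℕ) :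
    pderiv R i (p ^ (n + 1)) = p ^ n * ((n + 1 : ℕ) * pderiv R i p) := by
  rw [pderiv_pow, Nat.add_sub_cancel]; ring

theorem coeff_single_add_single_pow (hij : i ≠ j) (hp : ∀ a < m, coeff (single j a) p = 0)
    (n : ℕ) : coeff (single i 1 + single j (m * n)) (p ^ (n + 1)) =
      coeff (single j m) p ^ n * ((n + 1 : ℕ) * coeff (single i 1) p) := by
  rw [coeff_single_add_single_eq_coeff_pderiv hij, pderiv_pow_succ, ← coeff_restrictAxis,
    map_mul, map_pow, PowerSeries.coeff_pow_mul_of_X_pow_dvd (X_pow_dvd_restrictAxis hp),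
    coeff_restrictAxis, map_mul, map_natCast, map_mul, map_natCast, constantCoeff_restrictAxis,
    constantCoeff_pderiv]

theorem coeff_single_add_single_sq (hij : i ≠ j) (hp : ∀ a < m, coeff (single j a) p = 0) :
    coeff (single i 1 + single j m) (p ^ 2) =
      2 * coeff (single j m) p * coeff (single i 1) p := by
  have := coeff_single_add_single_pow hij hp 1
  rw [mul_one, pow_one] at this
  rw [this]
  push_cast
  ring

theorem coeff_single_add_single_pow_of_lt (hij : i ≠ j) (hp : ∀ a < m, coeff (single j a) p = 0)
    {n a : ℕ} (ha : a < m * n) : coeff (single i 1 + single j a) (p ^ (n + 1)) = 0 := by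
  rw [coeff_single_add_single_eq_coeff_pderiv hij, pderiv_pow_succ, ← coeff_restrictAxis,
    map_mul, map_pow,
    PowerSeries.coeff_pow_mul_of_X_pow_dvd_of_lt (X_pow_dvd_restrictAxis hp) n _ ha]

end Axis

theorem coeff_X_mul (i : σ) (φ : MvPowerSeries σ R) (d : σ →₀ ℕ) [Decidable (single i 1 ≤ d)] :
    coeff d (X i * φ) = if single i 1 ≤ d then coeff (d - single i 1) φ else 0 := by
  rw [X, coeff_monomial_mul, one_mul]
  congr

theorem exists_eq_sum_X_mul [Fintype σ] {f : MvPowerSeries σ R} (hf : constantCoeff f = 0) :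
    ∃ r : σ → MvPowerSeries σ R,
      f = ∑ i, X i * r i ∧ ∀ i, constantCoeff (r i) = coeff (single i 1) f := by
  classical
  let _ : LinearOrder σ := LinearOrder.lift' _ (Fintype.equivFin σ).injective
  -- `X i * r i` collects the monomials of `f` whose smallest variable is `i`
  let r : σ → MvPowerSeries σ R := fun i e =>
    if ∀ k < i, e k = 0 then coeff (e + single i 1) f else 0
  have hr (i : σ) (e : σ →₀ ℕ) :
      coeff e (r i) = if ∀ k < i, e k = 0 then coeff (e + single i 1) f else 0 := rfl
  refine ⟨r, ?_, fun i => ?_⟩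
  · ext d
    rw [map_sum]
    obtain rfl | hd := eq_or_ne d 0
    · rw [coeff_zero_eq_constantCoeff_apply, hf]
      refine (Finset.sum_eq_zero fun i _ => ?_).symm
      rw [coeff_X_mul, if_neg (fun h => by simpa using h i)]
    have hne : d.support.Nonempty := Finsupp.support_nonempty_iff.mpr hd
    set i₀ := d.support.min' hne
    have hle : single i₀ 1 ≤ d := by
      rw [single_le_iff, Nat.one_le_iff_ne_zero, ← mem_support_iff]
      exact d.support.min'_mem hne
    rw [Finset.sum_eq_single i₀]
    · rw [coeff_X_mul, if_pos hle, hr, tsub_add_cancel_of_le hle, if_pos]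
      intro k hk
      rw [tsub_apply, single_eq_of_ne hk.ne, Nat.sub_zero, ← notMem_support_iff]
      exact fun hk' => not_lt_of_ge (d.support.min'_le k hk') hk
    · intro i _ hii₀
      rw [coeff_X_mul]
      split_ifs with hile
      · have hi : i ∈ d.support :=
          mem_support_iff.mpr (Nat.one_le_iff_ne_zero.mp (single_le_iff.mp hile))
        have hi₀ : i₀ < i := lt_of_le_of_ne (d.support.min'_le i hi) (Ne.symm hii₀)
        rw [hr, if_neg]
        intro h
        have := h i₀ hi₀
        rw [tsub_apply, single_eq_of_ne hi₀.ne, Nat.sub_zero] at this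
        exact mem_support_iff.mp (d.support.min'_mem hne) this
      · rfl
    · simp
  · rw [← coeff_zero_eq_constantCoeff_apply, hr, zero_add, if_pos (fun _ _ => Finsupp.zero_apply)]

theorem coeff_single_one_mul (i : σ) (φ ψ : MvPowerSeries σ R) :
    coeff (single i 1) (φ * ψ) =
      coeff (single i 1) φ * constantCoeff ψ + coeff (single i 1) ψ * constantCoeff φ := by
  rw [← coeff_restrictAxis, map_mul, PowerSeries.coeff_one_mul, coeff_restrictAxis,
    coeff_restrictAxis, constantCoeff_restrictAxis, constantCoeff_restrictAxis]

section AlgEquiv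

variable {k : Type*} [Field k] (Φ : MvPowerSeries σ k ≃ₐ[k] MvPowerSeries σ k)

theorem constantCoeff_algEquiv_apply (f : MvPowerSeries σ k) :
    constantCoeff (Φ f) = constantCoeff f := by
  set g := f - C (constantCoeff f)
  have hg : ¬IsUnit (Φ g) := by
    rw [isUnit_map_iff, isUnit_iff_constantCoeff]
    simp [g]
  have hΦg : Φ g = Φ f - C (constantCoeff f) := by
    rw [map_sub]
    congr
    exact Φ.commutes _
  rw [isUnit_iff_constantCoeff, hΦg] at hg
  simpa [sub_eq_zero] using hg

variable [Fintype σ]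

theorem coeff_single_one_algEquiv_apply {f : MvPowerSeries σ k} (hf : constantCoeff f = 0)
    (j : σ) :
    coeff (single j 1) (Φ f) = ∑ i, coeff (single i 1) f * coeff (single j 1) (Φ (X i)) := by
  obtain ⟨r, rfl, hr⟩ := exists_eq_sum_X_mul hf
  simp only [map_sum, map_mul]
  refine Finset.sum_congr rfl fun i _ => ?_
  rw [coeff_single_one_mul, constantCoeff_algEquiv_apply, constantCoeff_algEquiv_apply,
    constantCoeff_X, mul_zero, add_zero, hr, map_sum, mul_comm]

theorem exists_coeff_single_one_algEquiv_X_ne_zero (j : σ) :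
    ∃ i, coeff (single j 1) (Φ (X i)) ≠ 0 := by
  by_contra! h
  have := coeff_single_one_algEquiv_apply Φ (f := Φ.symm (X j))
    (by rw [constantCoeff_algEquiv_apply, constantCoeff_X]) j
  simp [h] at this

theorem eq_zero_of_coeff_single_one_sum_smul_algEquiv_X (c : σ → k)
    (h : ∀ j, coeff (single j 1) (∑ i, c i • Φ (X i)) = 0) : c = 0 := by
  have hH : constantCoeff (∑ i, c i • Φ (X i)) = 0 := by
    simp [constantCoeff_algEquiv_apply]
  funext j
  have := coeff_single_one_algEquiv_apply Φ.symm hH j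
  classical
  simpa [h, coeff_X, single_left_inj one_ne_zero] using this

end AlgEquiv

end MvPowerSeries

namespace E6

variable {k : Type*} [Field k] (Ψ : MvPowerSeries (Fin 4) k ≃ₐ[k] MvPowerSeries (Fin 4) k)

theorem eq_zero_of_coeff_single_one_smul_add_smul {c₂ c₃ : k}
    (h : ∀ v, c₂ * coeff (single v 1) (Ψ (X 2)) + c₃ * coeff (single v 1) (Ψ (X 3)) = 0) :
    c₂ = 0 ∧ c₃ = 0 := by
  have := eq_zero_of_coeff_single_one_sum_smul_algEquiv_X Ψ ![0, 0, c₂, c₃]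
    (fun v => by simpa [Fin.sum_univ_four] using h v)
  exact ⟨congrFun this 2, congrFun this 3⟩

theorem coeff_t_pow_eq_zero_of_lt_one (i : Fin 4) : ∀ a < 1, coeff (single 3 a) (Ψ (X i)) = 0 := by
  intro a ha
  rw [Nat.lt_one_iff.mp ha, single_zero, coeff_zero_eq_constantCoeff_apply,
    constantCoeff_algEquiv_apply, constantCoeff_X]

theorem coeff_t_pow_eq_zero_of_lt_two {i : Fin 4} (hi : coeff (single 3 1) (Ψ (X i)) = 0) :
    ∀ a < 2, coeff (single 3 a) (Ψ (X i)) = 0 := by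
  intro a ha
  interval_cases a
  exacts [coeff_t_pow_eq_zero_of_lt_one Ψ i 0 one_pos, hi]

theorem coeff_t_X_two_eq_zero_and_coeff_t_X_three_eq_zero (hchar : (2 : k) ≠ 0)
    (hlow : ∀ d, weight ![4, 3, 2, 1] d < 6 →
      coeff d (Ψ (X 0) ^ 3 + Ψ (X 1) ^ 4 + Ψ (X 2) ^ 2 + Ψ (X 3) ^ 2) = 0) :
    coeff (single 3 1) (Ψ (X 2)) = 0 ∧ coeff (single 3 1) (Ψ (X 3)) = 0 := by
  have h1 := coeff_t_pow_eq_zero_of_lt_one Ψ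
  have ht2 := hlow (single 3 2) (by simp [weight_single])
  simp only [map_add] at ht2
  rw [coeff_single_pow_of_lt (h1 0) (by norm_num : 2 < 1 * 3),
    coeff_single_pow_of_lt (h1 1) (by norm_num : 2 < 1 * 4),
    coeff_single_pow (h1 2) (one_mul 2), coeff_single_pow (h1 3) (one_mul 2)] at ht2
  refine eq_zero_of_coeff_single_one_smul_add_smul Ψ fun v => ?_
  by_cases hv : v = 3
  · subst hv; linear_combination ht2
  have hvt := hlow (single v 1 + single 3 1) (by fin_cases v <;> simp_all [weight_single])
  simp only [map_add] at hvt
  rw [coeff_single_add_single_pow_of_lt hv (h1 0) (n := 2) (by norm_num),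
    coeff_single_add_single_pow_of_lt hv (h1 1) (n := 3) (by norm_num),
    coeff_single_add_single_sq hv (h1 2), coeff_single_add_single_sq hv (h1 3)] at hvt
  exact (mul_eq_zero.mp (by linear_combination hvt)).resolve_left hchar

theorem coeff_t_X_zero_eq_zero
    (hlow : ∀ d, weight ![4, 3, 2, 1] d < 6 →
      coeff d (Ψ (X 0) ^ 3 + Ψ (X 1) ^ 4 + Ψ (X 2) ^ 2 + Ψ (X 3) ^ 2) = 0)
    (ha₂ : coeff (single 3 1) (Ψ (X 2)) = 0) (ha₃ : coeff (single 3 1) (Ψ (X 3)) = 0) :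
    coeff (single 3 1) (Ψ (X 0)) = 0 := by
  have ht3 := hlow (single 3 3) (by simp [weight_single])
  simp only [map_add] at ht3
  rw [coeff_single_pow (coeff_t_pow_eq_zero_of_lt_one Ψ 0) (one_mul 3),
    coeff_single_pow_of_lt (coeff_t_pow_eq_zero_of_lt_one Ψ 1) (by norm_num : 3 < 1 * 4),
    coeff_single_pow_of_lt (coeff_t_pow_eq_zero_of_lt_two Ψ ha₂) (by norm_num : 3 < 2 * 2),
    coeff_single_pow_of_lt (coeff_t_pow_eq_zero_of_lt_two Ψ ha₃) (by norm_num : 3 < 2 * 2)] at ht3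
  exact pow_eq_zero_iff (n := 3) (by norm_num) |>.mp (by linear_combination ht3)

theorem false_of_coeff_eq_zero_of_weight_lt_six (hchar : (2 : k) ≠ 0)
    (hlow : ∀ d, weight ![4, 3, 2, 1] d < 6 →
      coeff d (Ψ (X 0) ^ 3 + Ψ (X 1) ^ 4 + Ψ (X 2) ^ 2 + Ψ (X 3) ^ 2) = 0)
    (hxt2 : coeff (single 0 1 + single 3 2)
      (Ψ (X 0) ^ 3 + Ψ (X 1) ^ 4 + Ψ (X 2) ^ 2 + Ψ (X 3) ^ 2) = 0) : False := by
  have h1 := coeff_t_pow_eq_zero_of_lt_one Ψ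
  obtain ⟨ha₂, ha₃⟩ := coeff_t_X_two_eq_zero_and_coeff_t_X_three_eq_zero Ψ hchar hlow
  have ha₀ := coeff_t_X_zero_eq_zero Ψ hlow ha₂ ha₃
  have ha₁ : coeff (single 3 1) (Ψ (X 1)) ≠ 0 := by
    obtain ⟨i, hi⟩ := exists_coeff_single_one_algEquiv_X_ne_zero Ψ 3
    fin_cases i
    exacts [absurd ha₀ hi, hi, absurd ha₂ hi, absurd ha₃ hi]
  have ht4 := hlow (single 3 4) (by simp [weight_single])
  simp only [map_add] at ht4
  rw [coeff_single_pow_of_lt (coeff_t_pow_eq_zero_of_lt_two Ψ ha₀) (by norm_num : 4 < 2 * 3),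
    coeff_single_pow (h1 1) (one_mul 4),
    coeff_single_pow (coeff_t_pow_eq_zero_of_lt_two Ψ ha₂) (two_mul 2),
    coeff_single_pow (coeff_t_pow_eq_zero_of_lt_two Ψ ha₃) (two_mul 2)] at ht4
  obtain ⟨hb₂, hb₃⟩ := eq_zero_of_coeff_single_one_smul_add_smul Ψ
    (c₂ := coeff (single 3 2) (Ψ (X 2))) (c₃ := coeff (single 3 2) (Ψ (X 3))) fun v => by
    by_cases hv : v = 3
    · subst hv; rw [ha₂, ha₃]; ring
    have hvt2 : coeff (single v 1 + single 3 2)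
        (Ψ (X 0) ^ 3 + Ψ (X 1) ^ 4 + Ψ (X 2) ^ 2 + Ψ (X 3) ^ 2) = 0 := by
      by_cases hv0 : v = 0
      · subst hv0; exact hxt2
      · exact hlow _ (by fin_cases v <;> simp_all [weight_single])
    simp only [map_add] at hvt2
    rw [coeff_single_add_single_pow_of_lt hv (coeff_t_pow_eq_zero_of_lt_two Ψ ha₀) (n := 2)
        (by norm_num),
      coeff_single_add_single_pow_of_lt hv (h1 1) (n := 3) (by norm_num),
      coeff_single_add_single_sq hv (coeff_t_pow_eq_zero_of_lt_two Ψ ha₂),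
      coeff_single_add_single_sq hv (coeff_t_pow_eq_zero_of_lt_two Ψ ha₃)] at hvt2
    exact (mul_eq_zero.mp (by linear_combination hvt2)).resolve_left hchar
  rw [hb₂, hb₃] at ht4
  exact ha₁ (pow_eq_zero_iff (n := 4) (by norm_num) |>.mp (by linear_combination ht4))

end E6

/-- if `wt f = 6` w.r.t. the weights `(4,3,2,1)` for `(x,y,z,t)` and `f` defines
an `E₆`-singularity (is contact equivalent to `x³ + y⁴ + z² + t²`), then the coefficient of
the monomial `xt²` in `f` is non-zero. -/
theorem stmt9 (f : MvPowerSeries (Fin 4) ℂ)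
    (hwt : f.weightedOrder ![4, 3, 2, 1] = (6 : ℕ∞))
    (hE6 : ContactEquiv f
      ((X 0 : MvPowerSeries (Fin 4) ℂ) ^ 3 + X 1 ^ 4 + X 2 ^ 2 + X 3 ^ 2)) :
    MvPowerSeries.coeff
      (Finsupp.single (0 : Fin 4) 1 + Finsupp.single (3 : Fin 4) 2) f ≠ 0 := by
  intro hxt2
  obtain ⟨Φ, u, hu⟩ := hE6
  have hw : ∀ i, ![4, 3, 2, 1] i ≠ 0 := by decide
  have hG := congrArg Φ.symm hu
  rw [map_mul, Φ.symm_apply_apply] at hG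
  simp only [map_add, map_pow] at hG
  refine E6.false_of_coeff_eq_zero_of_weight_lt_six Φ.symm two_ne_zero (fun d hd => ?_) ?_
  · rw [hG, coeff_mul_eq_constantCoeff_mul_of_weight_le hw (by rw [hwt]; exact_mod_cast hd.le),
      coeff_eq_zero_of_lt_weightedOrder _ (by rw [hwt]; exact_mod_cast hd), mul_zero]
  · rw [hG, coeff_mul_eq_constantCoeff_mul_of_weight_le hw (by rw [hwt]; simp [weight_single]),
      hxt2, mul_zero]
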